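/- For a positive integer n, there exists a connected simple graph of order n whose three metric subgraphs (central, annular, and peripheral subgraphs) are each isomorphic to a path P_m for some m ≥ 1 if and only if n ≥ 13. -/

import Mathlib

/-!
Write `r`, `d` for the radius and diameter. A nonempty annulus forces `r + 2 ≤ d ≤ 2r`. Every
peripheral vertex has a peripheral vertex at distance `d`, while the middle vertex of an induced
path on `m` vertices is within `m / 2` of all of them, so the periphery has at least `2d` vertices.
If `d ≥ 5` this gives `10` peripheral vertices, and center and annulus cannot both be single
vertices: the lone central vertex would be a leaf hanging at the annular vertex, which would then
have smaller eccentricity. If `d = 4`, then `r = 2`, every peripheral vertex has an annular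
neighbour, and an annulus on at most three vertices would have a middle vertex of eccentricity
`2`; so the annulus has at least `4` vertices and the periphery at least `8`.

Conversely, take the 13-vertex graph `metricPathModel` (radius 2, center `{0}`, annulus the path
`1 - 2 - 3 - 4`, periphery the path `5 - 6 - ⋯ - 12`) and replace its central vertex by a path of
`k ≥ 1` vertices, each adjacent to all neighbours of `0`. Every vertex keeps its eccentricity,
so the center becomes that path while annulus and periphery are unchanged.
-/

/-- Eccentricity of a vertex in a (finite connected) simple graph:
the maximum distance from `v` to any vertex. -/
noncomputable def SimpleGraph.mecc {V : Type*} (G : SimpleGraph V) (v : V) : ℕ :=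
  sSup (Set.range (G.dist v))

/-- Radius: the minimum eccentricity. -/
noncomputable def SimpleGraph.mrad {V : Type*} (G : SimpleGraph V) : ℕ :=
  sInf (Set.range G.mecc)

/-- Diameter: the maximum eccentricity. -/
noncomputable def SimpleGraph.mdiam {V : Type*} (G : SimpleGraph V) : ℕ :=
  sSup (Set.range G.mecc)

/-- The center: the set of vertices of minimum eccentricity. -/
noncomputable def SimpleGraph.mcenter {V : Type*} (G : SimpleGraph V) : Set V :=
  {v | G.mecc v = G.mrad}

/-- The annulus: the set of vertices of intermediate eccentricity. -/
noncomputable def SimpleGraph.mannulus {V : Type*} (G : SimpleGraph V) : Set V :=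
  {v | G.mrad < G.mecc v ∧ G.mecc v < G.mdiam}

/-- The periphery: the set of vertices of maximum eccentricity. -/
noncomputable def SimpleGraph.mperiphery {V : Type*} (G : SimpleGraph V) : Set V :=
  {v | G.mecc v = G.mdiam}

/-- All three metric subgraphs are (nonempty) paths. -/
noncomputable def metricSubgraphsArePaths {V : Type*} (G : SimpleGraph V) : Prop :=
  (∃ m : ℕ, 1 ≤ m ∧ Nonempty (G.induce G.mcenter ≃g SimpleGraph.pathGraph m)) ∧
  (∃ m : ℕ, 1 ≤ m ∧ Nonempty (G.induce G.mannulus ≃g SimpleGraph.pathGraph m)) ∧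
  (∃ m : ℕ, 1 ≤ m ∧ Nonempty (G.induce G.mperiphery ≃g SimpleGraph.pathGraph m))

open Function

namespace SimpleGraph

variable {V W : Type*} {G : SimpleGraph V} {H : SimpleGraph W}

lemma dist_map_le_of_adj_or_eq (f : V → W)
    (hf : ∀ u v, G.Adj u v → H.Adj (f u) (f v) ∨ f u = f v) {u v : V} (h : G.Reachable u v) :
    H.dist (f u) (f v) ≤ G.dist u v := by
  suffices ∀ {u v : V} (p : G.Walk u v), ∃ q : H.Walk (f u) (f v), q.length ≤ p.length by
    obtain ⟨p, hp⟩ := h.exists_walk_length_eq_dist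
    obtain ⟨q, hq⟩ := this p
    exact hp ▸ (dist_le q).trans hq
  intro u v p
  induction p with
  | nil => exact ⟨.nil, le_rfl⟩
  | cons hadj p ih =>
    obtain ⟨q, hq⟩ := ih
    rcases hf _ _ hadj with h | h
    · exact ⟨.cons h q, by simpa using hq⟩
    · exact ⟨q.copy h.symm rfl, by simp only [Walk.length_copy, Walk.length_cons]; omega⟩

lemma Iso.dist_apply (e : G ≃g H) (u v : V) : H.dist (e u) (e v) = G.dist u v := by
  by_cases h : G.Reachable u v
  · refine le_antisymm (dist_map_le_of_adj_or_eq e (fun _ _ h => .inl (e.map_adj_iff.2 h)) h) ?_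
    simpa using dist_map_le_of_adj_or_eq e.symm (fun _ _ h => .inl (e.symm.map_adj_iff.2 h))
      (e.reachable_iff.2 h)
  · rw [dist_eq_zero_of_not_reachable h, dist_eq_zero_of_not_reachable (mt e.reachable_iff.1 h)]

lemma Connected.exists_adj_dist_add_one_eq (hc : G.Connected) {u v : V} (h : u ≠ v) :
    ∃ w, G.Adj u w ∧ G.dist w v + 1 = G.dist u v := by
  obtain ⟨p, hp⟩ := hc.exists_walk_length_eq_dist u v
  cases p with
  | nil => exact absurd rfl h
  | @cons _ w _ hadj q =>
    have hle := dist_le q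
    have htri : G.dist u v ≤ G.dist u w + G.dist w v := hc.dist_triangle
    rw [dist_eq_one_iff_adj.2 hadj] at htri
    rw [Walk.length_cons] at hp
    exact ⟨w, hadj, by omega⟩

lemma pathGraph_dist_le {m : ℕ} {i j : Fin m} (h : i ≤ j) :
    (pathGraph m).dist i j ≤ j - i := by
  obtain ⟨d, hd⟩ : ∃ d, (j : ℕ) = i + d := ⟨j - i, by omega⟩
  induction d generalizing j with
  | zero => simp [Fin.ext (hd.trans (add_zero _))]
  | succ d ih =>
    let j' : Fin m := ⟨i + d, by omega⟩
    have hj'val : (j' : ℕ) = i + d := rfl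
    have hj' : (pathGraph m).dist j' j = 1 :=
      dist_eq_one_iff_adj.2 (pathGraph_adj.2 (.inl (by omega)))
    have := (pathGraph_preconnected m i j').dist_triangle_left j
    have := ih (j := j') (Fin.le_iff_val_le_val.2 (by omega)) hj'val
    omega

lemma exists_forall_dist_le_half_of_induce_iso {S : Set V} {m : ℕ}
    (e : G.induce S ≃g pathGraph m) (hm : 0 < m) :
    ∃ x ∈ S, ∀ y ∈ S, G.dist x y ≤ m / 2 := by
  let f : Fin m → V := fun i => e.symm i
  have hf (i j : Fin m) : G.dist (f i) (f j) ≤ (pathGraph m).dist i j :=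
    dist_map_le_of_adj_or_eq f (fun _ _ h => .inl (e.symm.map_adj_iff.2 h))
      (pathGraph_preconnected m i j)
  let mid : Fin m := ⟨m / 2, by omega⟩
  refine ⟨f mid, (e.symm mid).2, fun y hy => ?_⟩
  obtain ⟨j, rfl⟩ : ∃ j, f j = y := ⟨e ⟨y, hy⟩, by simp [f]⟩
  refine (hf mid j).trans ?_
  rcases le_total mid j with h | h
  · exact (pathGraph_dist_le h).trans (by simp only [mid]; omega)
  · rw [dist_comm]
    exact (pathGraph_dist_le h).trans (by simp only [mid]; omega)

lemma nonempty_induce_iso_pathGraph {S : Set V} {m : ℕ} (f : Fin m → V) (hf : Injective f)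
    (hS : Set.range f = S)
    (hadj : ∀ i j, G.Adj (f i) (f j) ↔ (i : ℕ) + 1 = j ∨ (j : ℕ) + 1 = i) :
    Nonempty (G.induce S ≃g pathGraph m) := by
  subst hS
  exact ⟨RelIso.symm
    { toEquiv := Equiv.ofInjective f hf
      map_rel_iff' := by intro i j; simp [pathGraph_adj, hadj] }⟩

lemma ncard_eq_of_induce_iso_pathGraph {S : Set V} {m : ℕ} (e : G.induce S ≃g pathGraph m) :
    S.ncard = m := by
  rw [← Nat.card_coe_set_eq, Nat.card_congr e.toEquiv, Nat.card_fin]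

lemma mrad_le_mecc (v : V) : G.mrad ≤ G.mecc v := Nat.sInf_le ⟨v, rfl⟩

lemma exists_mecc_eq_mrad [Nonempty V] : ∃ v, G.mecc v = G.mrad :=
  Nat.sInf_mem (Set.range_nonempty _)

lemma mrad_eq_of_le_mecc {r : ℕ} (h : ∀ v, r ≤ G.mecc v) {v : V} (hv : G.mecc v = r) :
    G.mrad = r :=
  le_antisymm (hv ▸ mrad_le_mecc v) (le_csInf ⟨_, v, rfl⟩ (Set.forall_mem_range.2 h))

section Finite

variable [Finite V]

lemma dist_le_mecc (v w : V) : G.dist v w ≤ G.mecc v :=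
  le_csSup (Set.finite_range _).bddAbove ⟨w, rfl⟩

lemma exists_dist_eq_mecc (v : V) : ∃ w, G.dist v w = G.mecc v :=
  Nat.sSup_mem (Set.range_nonempty_iff_nonempty.2 ⟨v⟩) (Set.finite_range _).bddAbove

lemma mecc_le_iff {v : V} {m : ℕ} : G.mecc v ≤ m ↔ ∀ w, G.dist v w ≤ m := by
  rw [mecc, csSup_le_iff (Set.finite_range _).bddAbove ⟨_, v, rfl⟩, Set.forall_mem_range]

lemma mecc_eq_of_forall_dist_le {v w : V} {m : ℕ} (h : ∀ w, G.dist v w ≤ m)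
    (hw : G.dist v w = m) : G.mecc v = m :=
  le_antisymm (mecc_le_iff.2 h) (hw ▸ dist_le_mecc v w)

lemma mecc_le_mdiam (v : V) : G.mecc v ≤ G.mdiam :=
  le_csSup (Set.finite_range _).bddAbove ⟨v, rfl⟩

lemma exists_mecc_eq_mdiam [Nonempty V] : ∃ v, G.mecc v = G.mdiam :=
  Nat.sSup_mem (Set.range_nonempty _) (Set.finite_range _).bddAbove

lemma mdiam_eq_of_forall_mecc_le {d : ℕ} (h : ∀ v, G.mecc v ≤ d) {v : V} (hv : G.mecc v = d) :
    G.mdiam = d :=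
  le_antisymm (csSup_le ⟨_, v, rfl⟩ (Set.forall_mem_range.2 h)) (hv ▸ mecc_le_mdiam v)

lemma exists_mem_mperiphery_dist_eq_mdiam {x : V} (hx : x ∈ G.mperiphery) :
    ∃ y ∈ G.mperiphery, G.dist x y = G.mdiam := by
  obtain ⟨y, hy⟩ := exists_dist_eq_mecc (G := G) x
  have hyx := dist_le_mecc (G := G) y x
  have hx : G.mecc x = G.mdiam := hx
  rw [dist_comm] at hyx
  exact ⟨y, le_antisymm (mecc_le_mdiam y) (by omega), hy.trans hx⟩

lemma two_mul_mdiam_le_of_mperiphery_iso {m : ℕ} (e : G.induce G.mperiphery ≃g pathGraph m)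
    (hm : 0 < m) : 2 * G.mdiam ≤ m := by
  obtain ⟨x, hx, hxP⟩ := exists_forall_dist_le_half_of_induce_iso e hm
  obtain ⟨y, hy, hxy⟩ := exists_mem_mperiphery_dist_eq_mdiam hx
  have := hxP y hy
  omega

lemma ncard_mcenter_add_ncard_mannulus_add_ncard_mperiphery_le (h : G.mrad < G.mdiam) :
    G.mcenter.ncard + G.mannulus.ncard + G.mperiphery.ncard ≤ Nat.card V := by
  have hCA : Disjoint G.mcenter G.mannulus :=
    Set.disjoint_left.2 fun _ (hC : _ = _) (hA : _ ∧ _) => by omega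
  have hCAP : Disjoint (G.mcenter ∪ G.mannulus) G.mperiphery :=
    Set.disjoint_left.2 fun _ hv (hP : _ = _) => by
      rcases hv with (hC : _ = _) | (hA : _ ∧ _) <;> omega
  rw [← Set.ncard_union_eq hCA, ← Set.ncard_union_eq hCAP]
  exact Set.ncard_le_card _

namespace Connected

lemma mecc_le_dist_add_mecc (hc : G.Connected) (u v : V) : G.mecc u ≤ G.dist u v + G.mecc v :=
  mecc_le_iff.2 fun w => hc.dist_triangle.trans (Nat.add_le_add_left (dist_le_mecc v w) _)

lemma mdiam_le_two_mul_mrad (hc : G.Connected) : G.mdiam ≤ 2 * G.mrad := by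
  have := hc.nonempty
  obtain ⟨x, hx⟩ := G.exists_mecc_eq_mdiam
  obtain ⟨c, hc'⟩ := G.exists_mecc_eq_mrad
  have hxc := hc.mecc_le_dist_add_mecc x c
  have hcx := dist_le_mecc (G := G) c x
  rw [dist_comm] at hcx
  omega

lemma mecc_lt_of_neighborSet_eq_singleton (hc : G.Connected) {u v : V}
    (hv : G.neighborSet v = {u}) (h2 : 2 ≤ G.mecc v) : G.mecc u < G.mecc v := by
  have hadj {w : V} : G.Adj v w ↔ w = u := Set.ext_iff.1 hv w
  suffices ∀ w, G.dist u w ≤ G.mecc v - 1 by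
    have := mecc_le_iff.2 this
    omega
  intro w
  by_cases hw : w = v
  · rw [hw, dist_comm, dist_eq_one_iff_adj.2 (hadj.2 rfl)]
    omega
  · obtain ⟨z, hz, hzw⟩ := hc.exists_adj_dist_add_one_eq (Ne.symm hw)
    have := dist_le_mecc (G := G) v w
    rw [hadj.1 hz] at hzw
    omega

lemma mannulus_ne_singleton_of_mcenter_eq_singleton (hc : G.Connected) {c : V}
    (hC : G.mcenter = {c}) (u : V) : G.mannulus ≠ {u} := by
  intro hA
  -- every neighbour of `c` has eccentricity at most `r + 1 < d` and is not central, so `c` is a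
  -- leaf hanging at `u`
  have hcr : G.mecc c = G.mrad := (hC ▸ rfl : c ∈ G.mcenter)
  have hu : G.mrad < G.mecc u ∧ G.mecc u < G.mdiam := (hA ▸ rfl : u ∈ G.mannulus)
  have hdr := hc.mdiam_le_two_mul_mrad
  have hnbr : G.neighborSet c ⊆ {u} := by
    intro w (hw : G.Adj c w)
    rw [← hA]
    refine ⟨lt_of_le_of_ne (mrad_le_mecc w) fun h => ?_, ?_⟩
    · have hwc : w ∈ G.mcenter := h.symm
      rw [hC] at hwc
      exact G.irrefl (hwc ▸ hw)
    · have := hc.mecc_le_dist_add_mecc w c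
      rw [dist_comm, dist_eq_one_iff_adj.2 hw] at this
      omega
  obtain ⟨w, hw⟩ := exists_dist_eq_mecc (G := G) c
  obtain ⟨z, hz, -⟩ := hc.exists_adj_dist_add_one_eq (u := c) (v := w) (by
    rintro rfl
    rw [dist_self] at hw
    omega)
  have hleaf : G.neighborSet c = {u} :=
    hnbr.antisymm (Set.singleton_subset_iff.2 (hnbr hz ▸ hz))
  have := hc.mecc_lt_of_neighborSet_eq_singleton hleaf (by omega)
  have := mrad_le_mecc (G := G) u
  omega

lemma exists_adj_mecc_add_one_eq_mdiam (hc : G.Connected) (hd : G.mdiam = 2 * G.mrad)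
    (hr : 0 < G.mrad) {x : V} (hx : x ∈ G.mperiphery) :
    ∃ y, G.Adj x y ∧ G.mecc y + 1 = G.mdiam := by
  have hx : G.mecc x = G.mdiam := hx
  have := hc.nonempty
  obtain ⟨c, hcr⟩ := G.exists_mecc_eq_mrad
  have hxc := hc.mecc_le_dist_add_mecc x c
  have hcx := dist_le_mecc (G := G) c x
  rw [dist_comm] at hcx
  obtain ⟨y, hxy, hyc⟩ := hc.exists_adj_dist_add_one_eq (u := x) (v := c) (by
    rintro rfl
    rw [dist_self] at hxc
    omega)
  have hyc' := hc.mecc_le_dist_add_mecc y c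
  have hxy' := hc.mecc_le_dist_add_mecc x y
  rw [dist_eq_one_iff_adj.2 hxy] at hxy'
  have := mecc_le_mdiam (G := G) y
  exact ⟨y, hxy, by omega⟩

lemma four_le_of_mannulus_iso (hc : G.Connected) (hr : G.mrad = 2) (hd : G.mdiam = 4) {m : ℕ}
    (e : G.induce G.mannulus ≃g pathGraph m) (hm : 0 < m) : 4 ≤ m := by
  by_contra! hm4
  obtain ⟨x, hx, hxA⟩ := exists_forall_dist_le_half_of_induce_iso e hm
  have hx : G.mrad < G.mecc x ∧ G.mecc x < G.mdiam := hx
  suffices G.mecc x ≤ 2 by omega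
  refine mecc_le_iff.2 fun w => ?_
  have hw := mecc_le_mdiam (G := G) w
  by_cases h2 : G.mecc w ≤ 2
  · exact dist_comm (G := G) ▸ (dist_le_mecc w x).trans h2
  by_cases h3 : G.mecc w = 3
  · have := hxA w ⟨by omega, by omega⟩
    omega
  obtain ⟨y, hwy, hy⟩ :=
    hc.exists_adj_mecc_add_one_eq_mdiam (by omega) (by omega) (show G.mecc w = G.mdiam by omega)
  have hxy := hxA y ⟨by omega, by omega⟩
  have hxw : G.dist x w ≤ G.dist x y + G.dist y w := hc.dist_triangle
  rw [dist_eq_one_iff_adj.2 hwy.symm] at hxw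
  omega

end Connected

theorem thirteen_le_card_of_metricSubgraphsArePaths (hc : G.Connected)
    (h : metricSubgraphsArePaths G) : 13 ≤ Nat.card V := by
  obtain ⟨⟨mc, hmc, ⟨eC⟩⟩, ⟨ma, hma, ⟨eA⟩⟩, ⟨mp, hmp, ⟨eP⟩⟩⟩ := h
  have hu : G.mrad < G.mecc _ ∧ G.mecc _ < G.mdiam := (eA.symm ⟨0, hma⟩).2
  have hdr := hc.mdiam_le_two_mul_mrad
  have hP := two_mul_mdiam_le_of_mperiphery_iso eP hmp
  have hcard := ncard_mcenter_add_ncard_mannulus_add_ncard_mperiphery_le (G := G) (by omega)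
  rw [ncard_eq_of_induce_iso_pathGraph eC, ncard_eq_of_induce_iso_pathGraph eA,
    ncard_eq_of_induce_iso_pathGraph eP] at hcard
  rcases Nat.lt_or_ge G.mdiam 5 with hd | hd
  · have := hc.four_le_of_mannulus_iso (by omega) (by omega) eA hma
    omega
  · have : ¬(mc = 1 ∧ ma = 1) := by
      rintro ⟨rfl, rfl⟩
      obtain ⟨c, hC⟩ := Set.ncard_eq_one.1 (ncard_eq_of_induce_iso_pathGraph eC)
      obtain ⟨u, hA⟩ := Set.ncard_eq_one.1 (ncard_eq_of_induce_iso_pathGraph eA)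
      exact hc.mannulus_ne_singleton_of_mcenter_eq_singleton hC u hA
    omega

end Finite

section Transfer

variable {ρ : V → W}

lemma mrad_eq_of_mecc_eq_comp (hρ : Surjective ρ) (h : G.mecc = H.mecc ∘ ρ) :
    G.mrad = H.mrad := by
  rw [mrad, mrad, h, hρ.range_comp]

lemma mdiam_eq_of_mecc_eq_comp (hρ : Surjective ρ) (h : G.mecc = H.mecc ∘ ρ) :
    G.mdiam = H.mdiam := by
  rw [mdiam, mdiam, h, hρ.range_comp]

lemma mcenter_eq_preimage (hρ : Surjective ρ) (h : G.mecc = H.mecc ∘ ρ) :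
    G.mcenter = ρ ⁻¹' H.mcenter := by
  ext x
  simp only [mcenter, Set.mem_ofPred_eq, Set.mem_preimage, mrad_eq_of_mecc_eq_comp hρ h, h,
    comp_apply]

lemma mannulus_eq_preimage (hρ : Surjective ρ) (h : G.mecc = H.mecc ∘ ρ) :
    G.mannulus = ρ ⁻¹' H.mannulus := by
  ext x
  simp only [mannulus, Set.mem_ofPred_eq, Set.mem_preimage, mrad_eq_of_mecc_eq_comp hρ h,
    mdiam_eq_of_mecc_eq_comp hρ h, h, comp_apply]

lemma mperiphery_eq_preimage (hρ : Surjective ρ) (h : G.mecc = H.mecc ∘ ρ) :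
    G.mperiphery = ρ ⁻¹' H.mperiphery := by
  ext x
  simp only [mperiphery, Set.mem_ofPred_eq, Set.mem_preimage, mdiam_eq_of_mecc_eq_comp hρ h, h,
    comp_apply]

end Transfer

lemma Iso.mecc_eq_comp (e : G ≃g H) : G.mecc = H.mecc ∘ e := by
  funext v
  rw [comp_apply, mecc, mecc, ← e.surjective.range_comp]
  congr 2
  funext w
  exact (e.dist_apply v w).symm

def Iso.inducePreimage (e : G ≃g H) (S : Set W) : G.induce (e ⁻¹' S) ≃g H.induce S where
  toEquiv := e.toEquiv.subtypeEquiv fun _ => Iff.rfl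
  map_rel_iff' := e.map_rel_iff

lemma metricSubgraphsArePaths_of_iso (e : G ≃g H) (h : metricSubgraphsArePaths H) :
    metricSubgraphsArePaths G := by
  rw [metricSubgraphsArePaths, mcenter_eq_preimage e.surjective e.mecc_eq_comp,
    mannulus_eq_preimage e.surjective e.mecc_eq_comp,
    mperiphery_eq_preimage e.surjective e.mecc_eq_comp]
  obtain ⟨⟨a, ha, ⟨eC⟩⟩, ⟨b, hb, ⟨eA⟩⟩, ⟨c, hc, ⟨eP⟩⟩⟩ := h
  exact ⟨⟨a, ha, ⟨(e.inducePreimage _).trans eC⟩⟩,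
    ⟨b, hb, ⟨(e.inducePreimage _).trans eA⟩⟩,
    ⟨c, hc, ⟨(e.inducePreimage _).trans eP⟩⟩⟩

lemma le_length_of_forall_adj_le_add_one (f : V → V → ℕ) (hself : ∀ v, f v v = 0)
    (hadj : ∀ u w v, G.Adj u w → f u v ≤ f w v + 1) {u v : V} (p : G.Walk u v) :
    f u v ≤ p.length := by
  induction p with
  | nil => simp [hself]
  | cons h p ih =>
    rw [Walk.length_cons]
    exact (hadj _ _ _ h).trans (by omega)

lemma exists_walk_length_eq_of_exists_adj (f : V → V → ℕ)
    (hzero : ∀ u v, f u v = 0 → u = v)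
    (hstep : ∀ u v, 0 < f u v → ∃ w, G.Adj u w ∧ f w v + 1 = f u v) (u v : V) :
    ∃ p : G.Walk u v, p.length = f u v := by
  induction hn : f u v generalizing u with
  | zero =>
    obtain rfl := hzero u v hn
    exact ⟨.nil, rfl⟩
  | succ n ih =>
    obtain ⟨w, huw, hw⟩ := hstep u v (by omega)
    obtain ⟨p, hp⟩ := ih w (by omega)
    exact ⟨.cons huw p, by rw [Walk.length_cons, hp]⟩

def pathBlowup (H : SimpleGraph W) (v : W) (k : ℕ) : SimpleGraph (Fin k ⊕ {w // w ≠ v}) where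
  Adj
    | .inl i, .inl j => (pathGraph k).Adj i j
    | .inl _, .inr b => H.Adj v b
    | .inr a, .inl _ => H.Adj a v
    | .inr a, .inr b => H.Adj a b
  symm := ⟨by rintro (i | a) (j | b) h <;> exact h.symm⟩
  loopless := ⟨by rintro (i | a) h; exacts [(pathGraph k).irrefl h, H.irrefl h]⟩

namespace pathBlowup

variable {v : W} {k : ℕ}

def proj : Fin k ⊕ {w // w ≠ v} → W := Sum.elim (fun _ => v) Subtype.val

variable (H v) in
def lift [DecidableEq W] (i : Fin k) : H →g H.pathBlowup v k where
  toFun w := if h : w = v then .inl i else .inr ⟨w, h⟩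
  map_rel' {a b} h := by
    by_cases ha : a = v <;> by_cases hb : b = v
    · exact absurd (ha.trans hb.symm ▸ h) (H.irrefl)
    all_goals simp only [ha, hb, dite_true, dite_false]
    · exact ha ▸ h
    · exact hb ▸ h
    · exact h

lemma proj_surjective (hk : 0 < k) : Surjective (proj : Fin k ⊕ {w // w ≠ v} → W) := by
  intro w
  by_cases h : w = v
  exacts [⟨.inl ⟨0, hk⟩, h.symm⟩, ⟨.inr ⟨w, h⟩, rfl⟩]

lemma proj_adj_or_eq {x y : Fin k ⊕ {w // w ≠ v}} (h : (H.pathBlowup v k).Adj x y) :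
    H.Adj (proj x) (proj y) ∨ proj x = proj y := by
  rcases x with i | a <;> rcases y with j | b
  exacts [.inr rfl, .inl h, .inl h, .inl h]

section Lift

variable [DecidableEq W]

lemma proj_lift (i : Fin k) (w : W) : proj (lift H v i w) = w := by
  by_cases h : w = v <;> simp [lift, proj, h]

lemma lift_proj_inl (i : Fin k) :
    lift H v i (proj (.inl i : Fin k ⊕ {w // w ≠ v})) = .inl i := by
  simp [lift, proj]

lemma lift_proj_inr (i : Fin k) (a : {w // w ≠ v}) :
    lift H v i (proj (.inr a : Fin k ⊕ {w // w ≠ v})) = .inr a := by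
  simp [lift, proj, a.2]

lemma exists_lift_proj_eq (hk : 0 < k) (x : Fin k ⊕ {w // w ≠ v}) :
    ∃ i, lift H v i (proj x) = x := by
  rcases x with i | a
  exacts [⟨i, lift_proj_inl i⟩, ⟨⟨0, hk⟩, lift_proj_inr _ a⟩]

end Lift

lemma connected [Nontrivial W] (hH : H.Connected) (hk : 0 < k) :
    (H.pathBlowup v k).Connected := by
  classical
  obtain ⟨c, hc⟩ := exists_ne v
  have hreach (x : Fin k ⊕ {w // w ≠ v}) :
      (H.pathBlowup v k).Reachable x (.inr ⟨c, hc⟩) := by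
    obtain ⟨i, hi⟩ := exists_lift_proj_eq (H := H) hk x
    have := (hH.preconnected (proj x) c).map (lift H v i)
    rwa [hi, lift, RelHom.coeFn_mk, dif_neg hc] at this
  exact (connected_iff _).2
    ⟨fun x y => (hreach x).trans (hreach y).symm, ⟨.inr ⟨c, hc⟩⟩⟩

lemma dist_eq_of_lift_proj_eq [DecidableEq W] (hH : H.Connected)
    (hB : (H.pathBlowup v k).Connected) {i : Fin k} {x y : Fin k ⊕ {w // w ≠ v}}
    (hx : lift H v i (proj x) = x) (hy : lift H v i (proj y) = y) :
    (H.pathBlowup v k).dist x y = H.dist (proj x) (proj y) := by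
  refine le_antisymm ?_
    (dist_map_le_of_adj_or_eq proj (fun _ _ => proj_adj_or_eq) (hB.preconnected x y))
  have := dist_map_le_of_adj_or_eq (lift H v i) (fun _ _ h => .inl ((lift H v i).map_adj h))
    (hH.preconnected (proj x) (proj y))
  rwa [hx, hy] at this

lemma dist_inl_inl_le_two {c : W} (hc : H.Adj v c) (i j : Fin k) :
    (H.pathBlowup v k).dist (.inl i) (.inl j) ≤ 2 := by
  let x : Fin k ⊕ {w // w ≠ v} := .inr ⟨c, hc.ne.symm⟩
  have hi : (H.pathBlowup v k).Adj (.inl i) x := hc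
  have hj : (H.pathBlowup v k).Adj x (.inl j) := hc.symm
  exact dist_le (.cons hi (.cons hj .nil))

/-- Two vertices that are not distinct twins lie in the image of a single `lift H v i`, on which
`proj` is distance preserving; distinct twins are at distance at most `2 ≤ H.mecc v`. -/
theorem mecc_eq_comp_proj [Finite W] (hH : H.Connected) (hk : 0 < k) (hv : 2 ≤ H.mecc v) :
    (H.pathBlowup v k).mecc = H.mecc ∘ proj := by
  classical
  obtain ⟨w₀, hw₀⟩ := exists_dist_eq_mecc (G := H) v
  obtain ⟨c, hvc, -⟩ := hH.exists_adj_dist_add_one_eq (u := v) (v := w₀) (by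
    rintro rfl
    rw [dist_self] at hw₀
    omega)
  have : Nontrivial W := ⟨⟨v, c, hvc.ne⟩⟩
  have hB := connected (v := v) hH hk
  have hle {i x y} (hx : lift H v i (proj x) = x) (hy : lift H v i (proj y) = y) :
      (H.pathBlowup v k).dist x y ≤ H.mecc (proj x) :=
    (dist_eq_of_lift_proj_eq hH hB hx hy).trans_le (dist_le_mecc _ _)
  funext x
  obtain ⟨i₀, hi₀⟩ := exists_lift_proj_eq (H := H) hk x
  obtain ⟨w, hw⟩ := exists_dist_eq_mecc (G := H) (proj x)
  refine mecc_eq_of_forall_dist_le (w := lift H v i₀ w) (fun y => ?_) ?_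
  · rcases x with i | a <;> rcases y with j | b
    · exact (dist_inl_inl_le_two hvc i j).trans hv
    · exact hle (lift_proj_inl i) (lift_proj_inr i _)
    · exact hle (lift_proj_inr j _) (lift_proj_inl j)
    · exact hle (lift_proj_inr ⟨0, hk⟩ _) (lift_proj_inr _ _)
  · rw [dist_eq_of_lift_proj_eq hH hB hi₀ (by rw [proj_lift]), proj_lift, hw, comp_apply]

lemma proj_preimage_singleton :
    proj ⁻¹' {v} = Set.range (Sum.inl : Fin k → Fin k ⊕ {w // w ≠ v}) := by
  ext (i | a)
  · simp [proj]
  · simp [proj, a.2]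

lemma nonempty_induce_preimage_iso_pathGraph {m : ℕ} (g : Fin m → W) (hg : Injective g)
    (hgv : ∀ i, g i ≠ v)
    (hadj : ∀ i j, H.Adj (g i) (g j) ↔ (i : ℕ) + 1 = j ∨ (j : ℕ) + 1 = i) :
    Nonempty ((H.pathBlowup v k).induce (proj ⁻¹' Set.range g) ≃g pathGraph m) := by
  refine nonempty_induce_iso_pathGraph (fun i => .inr ⟨g i, hgv i⟩)
    (fun i j h => hg (congrArg Subtype.val (Sum.inr_injective h))) ?_ hadj
  ext (i | a)
  · simp [proj, hgv]
  · simp [proj, Subtype.ext_iff]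

end pathBlowup

/-- Hub `0`, annulus path `1 - 2 - 3 - 4`, periphery path `5 - ⋯ - 12`; each annular vertex is
joined to two consecutive peripheral ones, which puts every peripheral vertex at distance `4` from
some other one while keeping it at distance `2` from the hub. -/
def metricPathModel : SimpleGraph (Fin 13) :=
  fromRel fun a b => ((a : ℕ), (b : ℕ)) ∈
    [(0, 1), (0, 2), (0, 3), (0, 4), (1, 2), (2, 3), (3, 4),
     (5, 6), (6, 7), (7, 8), (8, 9), (9, 10), (10, 11), (11, 12),
     (1, 7), (1, 8), (2, 9), (2, 10), (3, 11), (3, 12), (4, 5), (4, 6)]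

instance : DecidableRel metricPathModel.Adj := fun _ _ => inferInstanceAs (Decidable (_ ∧ _))

namespace metricPathModel

def distTable : Fin 13 → Fin 13 → ℕ :=
  ![![0, 1, 1, 1, 1, 2, 2, 2, 2, 2, 2, 2, 2],
    ![1, 0, 1, 2, 2, 3, 2, 1, 1, 2, 2, 3, 3],
    ![1, 1, 0, 1, 2, 3, 3, 2, 2, 1, 1, 2, 2],
    ![1, 2, 1, 0, 1, 2, 2, 3, 3, 2, 2, 1, 1],
    ![1, 2, 2, 1, 0, 1, 1, 2, 3, 3, 3, 2, 2],
    ![2, 3, 3, 2, 1, 0, 1, 2, 3, 4, 4, 3, 3],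
    ![2, 2, 3, 2, 1, 1, 0, 1, 2, 3, 4, 3, 3],
    ![2, 1, 2, 3, 2, 2, 1, 0, 1, 2, 3, 4, 4],
    ![2, 1, 2, 3, 3, 3, 2, 1, 0, 1, 2, 3, 4],
    ![2, 2, 1, 2, 3, 4, 3, 2, 1, 0, 1, 2, 3],
    ![2, 2, 1, 2, 3, 4, 4, 3, 2, 1, 0, 1, 2],
    ![2, 3, 2, 1, 2, 3, 3, 4, 3, 2, 1, 0, 1],
    ![2, 3, 2, 1, 2, 3, 3, 4, 4, 3, 2, 1, 0]]

def eccTable : Fin 13 → ℕ := ![2, 3, 3, 3, 3, 4, 4, 4, 4, 4, 4, 4, 4]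

lemma exists_walk_length_eq (a b : Fin 13) :
    ∃ p : metricPathModel.Walk a b, p.length = distTable a b :=
  exists_walk_length_eq_of_exists_adj distTable (by decide) (by decide) a b

lemma connected : metricPathModel.Connected :=
  (connected_iff _).2 ⟨fun a b => (exists_walk_length_eq a b).elim fun p _ => p.reachable,
    ⟨0⟩⟩

lemma dist_eq (a b : Fin 13) : metricPathModel.dist a b = distTable a b := by
  obtain ⟨p, hp⟩ := exists_walk_length_eq a b
  obtain ⟨q, hq⟩ := p.reachable.exists_walk_length_eq_dist
  exact le_antisymm (hp ▸ dist_le p)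
    (hq ▸ le_length_of_forall_adj_le_add_one distTable (by decide) (by decide) q)

lemma mecc_eq (a : Fin 13) : metricPathModel.mecc a = eccTable a := by
  obtain ⟨hle, b, hb⟩ :
      (∀ b, distTable a b ≤ eccTable a) ∧ ∃ b, distTable a b = eccTable a := by
    revert a
    decide
  exact mecc_eq_of_forall_dist_le (fun b => dist_eq a b ▸ hle b) ((dist_eq a b).trans hb)

lemma mrad_eq : metricPathModel.mrad = 2 :=
  mrad_eq_of_le_mecc (fun a => by rw [mecc_eq]; revert a; decide) (mecc_eq 0)

lemma mdiam_eq : metricPathModel.mdiam = 4 :=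
  mdiam_eq_of_forall_mecc_le (fun a => by rw [mecc_eq]; revert a; decide) (mecc_eq 5)

def annulusPath (i : Fin 4) : Fin 13 := ⟨i + 1, by omega⟩

def peripheryPath (i : Fin 8) : Fin 13 := ⟨i + 5, by omega⟩

lemma mcenter_eq : metricPathModel.mcenter = {0} := by
  ext a
  simp only [mcenter, Set.mem_ofPred_eq, Set.mem_singleton_iff, mecc_eq, mrad_eq]
  revert a
  decide

lemma mannulus_eq : metricPathModel.mannulus = Set.range annulusPath := by
  ext a
  simp only [mannulus, Set.mem_ofPred_eq, Set.mem_range, mecc_eq, mrad_eq, mdiam_eq]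
  revert a
  decide

lemma mperiphery_eq : metricPathModel.mperiphery = Set.range peripheryPath := by
  ext a
  simp only [mperiphery, Set.mem_ofPred_eq, Set.mem_range, mecc_eq, mdiam_eq]
  revert a
  decide

end metricPathModel

theorem exists_connected_metricSubgraphsArePaths {k : ℕ} (hk : 0 < k) :
    ∃ G : SimpleGraph (Fin (k + 12)), G.Connected ∧ metricSubgraphsArePaths G := by
  let B := metricPathModel.pathBlowup 0 k
  have hecc : B.mecc = metricPathModel.mecc ∘ pathBlowup.proj :=
    pathBlowup.mecc_eq_comp_proj metricPathModel.connected hk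
      (by rw [metricPathModel.mecc_eq]; decide)
  have hproj := pathBlowup.proj_surjective (v := (0 : Fin 13)) hk
  have hB : metricSubgraphsArePaths B := by
    refine ⟨⟨k, hk, ?_⟩, ⟨4, by norm_num, ?_⟩, ⟨8, by norm_num, ?_⟩⟩
    · rw [mcenter_eq_preimage hproj hecc, metricPathModel.mcenter_eq,
        pathBlowup.proj_preimage_singleton]
      exact nonempty_induce_iso_pathGraph Sum.inl Sum.inl_injective rfl fun _ _ => pathGraph_adj
    · rw [mannulus_eq_preimage hproj hecc, metricPathModel.mannulus_eq]
      exact pathBlowup.nonempty_induce_preimage_iso_pathGraph _ (by decide) (by decide) (by decide)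
    · rw [mperiphery_eq_preimage hproj hecc, metricPathModel.mperiphery_eq]
      exact pathBlowup.nonempty_induce_preimage_iso_pathGraph _ (by decide) (by decide) (by decide)
  have hcard : Fintype.card (Fin k ⊕ {a : Fin 13 // a ≠ 0}) = k + 12 := by simp
  exact ⟨B.overFin hcard,
    (B.overFinIso hcard).connected_iff.1 (pathBlowup.connected metricPathModel.connected hk),
    metricSubgraphsArePaths_of_iso (B.overFinIso hcard).symm hB⟩

end SimpleGraph

theorem exists_graph_with_path_metric_subgraphs_iff_general
    (n : ℕ) :
    (∃ G : SimpleGraph (Fin n), G.Connected ∧ metricSubgraphsArePaths G) ↔ 13 ≤ n := by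
  constructor
  · rintro ⟨G, hc, h⟩
    simpa using SimpleGraph.thirteen_le_card_of_metricSubgraphsArePaths hc h
  · intro hn
    obtain ⟨k, rfl⟩ : ∃ k, n = k + 12 := ⟨n - 12, by omega⟩
    exact SimpleGraph.exists_connected_metricSubgraphsArePaths (by omega)

theorem exists_graph_with_path_metric_subgraphs_iff
    (n : ℕ) (hn : 0 < n) :
    (∃ G : SimpleGraph (Fin n), G.Connected ∧ metricSubgraphsArePaths G) ↔ 13 ≤ n :=
  exists_graph_with_path_metric_subgraphs_iff_general n
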